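/- If P and Q are incomparable implication filters of an MV-algebra (neither P ⊆ Q nor Q ⊆ P), then there exists a counit belonging to Q but not to P. -/

import Mathlib

/-- An MV-algebra `(α, ⊕, ¬, 0)` with the standard axioms. -/
class MV (α : Type*) extends Add α, Neg α, Zero α where
  add_assoc : ∀ a b c : α, a + (b + c) = (a + b) + c
  add_comm : ∀ a b : α, a + b = b + a
  add_zero : ∀ a : α, a + 0 = a
  neg_neg : ∀ a : α, - -a = a
  add_neg_zero : ∀ a : α, a + -(0 : α) = -(0 : α)
  luk : ∀ a b : α, -(-a + b) + b = -(-b + a) + a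

namespace MV

variable {α : Type*} [MV α]

/-- The top element `1 = ¬0`. -/
def one (α : Type*) [MV α] : α := -(0 : α)

/-- Implication `x → y = ¬x ⊕ y`. -/
def imp (a b : α) : α := -a + b

/-- Strong conjunction `x ⊗ y = ¬(¬x ⊕ ¬y)`. -/
def otimes (a b : α) : α := -(-a + -b)

/-- Join `x ∨ y = (x → y) → y`. -/
def sup (a b : α) : α := imp (imp a b) b

/-- Meet `x ∧ y = ¬(¬x ∨ ¬y)`. -/
def inf (a b : α) : α := -(sup (-a) (-b))

/-- Order: `x ≤ y` iff `x → y = 1`. -/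
def le (a b : α) : Prop := imp a b = one α

/-- Strict order. -/
def lt (a b : α) : Prop := le a b ∧ a ≠ b

/-- `n`-fold `⊗`-power. -/
def pow (a : α) : ℕ → α
  | 0 => one α
  | n + 1 => otimes a (pow a n)

/-- An implication filter: a lattice filter closed under `⊗`. -/
def IsImpFilter (F : Set α) : Prop :=
  one α ∈ F ∧ (∀ x ∈ F, ∀ y : α, le x y → y ∈ F) ∧
    (∀ x ∈ F, ∀ y ∈ F, inf x y ∈ F) ∧ (∀ x ∈ F, ∀ y ∈ F, otimes x y ∈ F)

/-- A prime implication filter: proper and `x ∨ y ∈ F → x ∈ F ∨ y ∈ F`. -/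
def IsPrime (F : Set α) : Prop :=
  IsImpFilter F ∧ F ≠ Set.univ ∧ ∀ x y : α, sup x y ∈ F → x ∈ F ∨ y ∈ F

/-- A minimal prime implication filter. -/
def IsMinimalPrime (F : Set α) : Prop :=
  IsPrime F ∧ ∀ G : Set α, IsPrime G → G ⊆ F → G = F

/-- A maximal proper implication filter. -/
def IsMaximal (F : Set α) : Prop :=
  IsImpFilter F ∧ F ≠ Set.univ ∧
    ∀ G : Set α, IsImpFilter G → G ≠ Set.univ → F ⊆ G → G = F

/-- A counit: `u < 1` joining to `1` with some `v < 1`. -/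
def IsCounit (u : α) : Prop :=
  lt u (one α) ∧ ∃ v : α, lt v (one α) ∧ sup u v = one α

/-- The implication filter generated by a set. -/
def gen (S : Set α) : Set α := ⋂₀ {F : Set α | IsImpFilter F ∧ S ⊆ F}

/-- The Conrad filter: the implication filter generated by all counits. -/
def conrad (α : Type*) [MV α] : Set α := gen {u : α | IsCounit u}

/-- The localizing filter `ℓ(P)`, generated by `{x → p : p ∈ P, x ∉ P}`. -/
def locFilter (P : Set α) : Set α :=
  gen {z : α | ∃ x : α, x ∉ P ∧ ∃ p ∈ P, z = imp x p}

end MV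

/-!
Pick `p ∈ P \ Q` and `q ∈ Q \ P`; then `u = p → q` works, with `v = q → p`. Since `q ≤ p → q`,
`u ∈ Q`. Modus ponens holds in implication filters because `p ⊗ (p → q) = p ∧ q ≤ q`, so `u ∈ P`
would force `q ∈ P`; symmetrically `v ∉ Q`. Hence `u, v ≠ 1`, while prelinearity gives `u ∨ v = 1`.
-/

namespace MV

variable {α : Type*} [MV α] {a b : α}

theorem zero_add (a : α) : 0 + a = a := by
  rw [MV.add_comm, MV.add_zero]

theorem neg_one : -one α = 0 := MV.neg_neg 0

theorem add_one (a : α) : a + one α = one α := add_neg_zero a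

theorem one_add (a : α) : one α + a = one α := by
  rw [MV.add_comm, add_one]

theorem neg_add_self (a : α) : -a + a = one α := by
  simpa only [neg_one, zero_add, add_one] using luk (one α) a

theorem add_neg_self (a : α) : a + -a = one α := by
  rw [MV.add_comm]; exact neg_add_self a

theorem le_one (a : α) : le a (one α) := add_neg_zero (-a)

theorem lt_one_of_ne (h : a ≠ one α) : lt a (one α) := ⟨le_one a, h⟩

theorem le_imp (a b : α) : le b (imp a b) := by
  show -b + (-a + b) = one α
  rw [MV.add_assoc, MV.add_comm (-b), ← MV.add_assoc, neg_add_self, add_one]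

theorem neg_imp_le (a b : α) : le (-imp a b) a := by
  show - -(-a + b) + a = one α
  rw [MV.neg_neg, MV.add_comm (-a) b, ← MV.add_assoc, neg_add_self, add_one]

theorem sup_comm (a b : α) : sup a b = sup b a := luk a b

theorem sup_eq_left_of_le (h : le b a) : sup a b = a := by
  rw [sup_comm]
  show -imp b a + a = a
  rw [h, neg_one, zero_add]

theorem inf_comm (a b : α) : inf a b = inf b a := by
  unfold inf; rw [sup_comm]

theorem otimes_imp (a b : α) : otimes a (imp a b) = inf a b := by
  rw [inf_comm]
  show -(-a + -(-a + b)) = -(-(- -b + -a) + -a)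
  rw [MV.neg_neg, MV.add_comm b, MV.add_comm (-a)]

theorem inf_le_right (a b : α) : le (inf a b) b := by
  rw [inf_comm]
  show -(-(-(- -b + -a) + -a)) + b = one α
  rw [MV.neg_neg, MV.neg_neg, ← MV.add_assoc, MV.add_comm (-a), neg_add_self]

theorem inf_add_neg (a b : α) : inf a b + -b = a + -b := by
  have h : inf a b + -b = sup (a + -b) (-b) := by
    show -(-(- -a + -b) + -b) + -b = _
    rw [MV.neg_neg]; rfl
  rw [h, sup_eq_left_of_le]
  show - -b + (a + -b) = one α
  rw [MV.neg_neg, MV.add_comm a, MV.add_assoc, add_neg_self, one_add]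

theorem sup_imp_imp (a b : α) : sup (imp a b) (imp b a) = one α := by
  -- `a ∨ ¬(a → b) = a`, read through `a ∨ x = (a ⊗ ¬x) ⊕ x` and `a ⊗ (a → b) = a ∧ b`
  have hsup : inf a b + -imp a b = a := by
    rw [← otimes_imp]
    exact sup_eq_left_of_le (neg_imp_le a b)
  have key : imp (imp a b) (imp b a) = imp b a :=
    calc -imp a b + (-b + a) = -imp a b + (inf a b + -b) := by
          rw [inf_add_neg, MV.add_comm a]
      _ = (inf a b + -imp a b) + -b := by
          rw [MV.add_assoc, MV.add_comm (-imp a b)]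
      _ = -b + a := by rw [hsup, MV.add_comm]
  show imp (imp (imp a b) (imp b a)) (imp b a) = one α
  rw [key]; exact neg_add_self _

theorem isCounit_imp (hab : imp a b ≠ one α) (hba : imp b a ≠ one α) : IsCounit (imp a b) :=
  ⟨lt_one_of_ne hab, imp b a, lt_one_of_ne hba, sup_imp_imp a b⟩

namespace IsImpFilter

variable {F : Set α}

theorem one_mem (hF : IsImpFilter F) : one α ∈ F := hF.1

theorem mem_of_le (hF : IsImpFilter F) (ha : a ∈ F) (h : le a b) : b ∈ F := hF.2.1 a ha b h

theorem imp_mem (hF : IsImpFilter F) (hb : b ∈ F) : imp a b ∈ F := hF.mem_of_le hb (le_imp a b)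

theorem mem_of_imp_mem (hF : IsImpFilter F) (ha : a ∈ F) (hab : imp a b ∈ F) : b ∈ F := by
  have h := hF.2.2.2 a ha _ hab
  rw [otimes_imp] at h
  exact hF.mem_of_le h (inf_le_right a b)

theorem ne_one_of_notMem (hF : IsImpFilter F) (ha : a ∉ F) : a ≠ one α :=
  fun h => ha (h ▸ hF.one_mem)

end IsImpFilter

end MV

open MV

/-- Incomparable implication filters differ by a counit. -/
theorem counit_of_incomparable {α : Type*} [MV α] (P Q : Set α)
    (hP : IsImpFilter P) (hQ : IsImpFilter Q) (hPQ : ¬P ⊆ Q) (hQP : ¬Q ⊆ P) :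
    ∃ u : α, IsCounit u ∧ u ∈ Q ∧ u ∉ P := by
  obtain ⟨p, hpP, hpQ⟩ := Set.not_subset.mp hPQ
  obtain ⟨q, hqQ, hqP⟩ := Set.not_subset.mp hQP
  have hpq : imp p q ∉ P := fun h => hqP (hP.mem_of_imp_mem hpP h)
  have hqp : imp q p ∉ Q := fun h => hpQ (hQ.mem_of_imp_mem hqQ h)
  exact ⟨imp p q, isCounit_imp (hP.ne_one_of_notMem hpq) (hQ.ne_one_of_notMem hqp),
    hQ.imp_mem hqQ, hpq⟩
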